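/- arXiv:2303.07841 — 6 statements merged into one kernel-verified Lean document; each statement's English description precedes it below -/
import Mathlib

section
/- For every density matrix ρ and all Hermitian n×n matrices H and V, the real number P = tr(iH[ρ,V]) satisfies the identity tr(iH[ρ,V]) = tr(i[H,√ρ]{√ρ,V}) and the Cauchy–Schwarz-type bound tr(iH[ρ,V]) ≤ √( (−tr([H,√ρ]²)) · tr({√ρ,V}²) ). (Key step in the proof of Theorem 1.) -/
open Matrix BigOperators
open scoped ComplexOrder

noncomputable section

/-- Commutator of two square matrices. -/
def mComm {d : Type*} [Fintype d] (A B : Matrix d d ℂ) : Matrix d d ℂ := A * B - B * A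

/-- Anticommutator of two square matrices. -/
def mAComm {d : Type*} [Fintype d] (A B : Matrix d d ℂ) : Matrix d d ℂ := A * B + B * A

/-!
Writing `ρ = s²`, cyclicity of the trace turns `tr(H[s², V])` into `tr([H, s]{s, V})`.
For Hermitian `H`, `s`, `V` both `i[H, s]` and `{s, V}` are Hermitian, so the power is the
Hilbert–Schmidt inner product `tr(XY)` of two Hermitian matrices: it is real, Cauchy–Schwarz
bounds it, and `tr((i[H, s])²) = -tr([H, s]²)`.
-/

namespace Matrix

variable {n : Type*} [Fintype n]

theorem re_trace_mul_conjTranspose_le {𝕜 : Type*} [RCLike 𝕜] (X Y : Matrix n n 𝕜) :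
    RCLike.re (X * Yᴴ).trace
      ≤ √(RCLike.re (X * Xᴴ).trace * RCLike.re (Y * Yᴴ).trace) := by
  classical
  -- the Hilbert–Schmidt inner product `⟪W, Z⟫ = tr(Z Wᴴ)`
  let _ := toMatrixSeminormedAddCommGroup (1 : Matrix n n 𝕜) PosSemidef.one
  let _ := toMatrixInnerProductSpace (1 : Matrix n n 𝕜) PosSemidef.one
  have hinner (Z W : Matrix n n 𝕜) : inner 𝕜 W Z = (Z * Wᴴ).trace := by
    change (Z * 1 * Wᴴ).trace = _
    rw [mul_one]
  have hnorm (Z : Matrix n n 𝕜) : ‖Z‖ = √(RCLike.re (Z * Zᴴ).trace) := by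
    rw [norm_eq_sqrt_re_inner (𝕜 := 𝕜), hinner]
  have hY : 0 ≤ RCLike.re (Y * Yᴴ).trace := by
    simpa only [hinner] using inner_self_nonneg (𝕜 := 𝕜) (x := Y)
  calc RCLike.re (X * Yᴴ).trace = RCLike.re (inner 𝕜 Y X) := by rw [hinner]
    _ ≤ ‖Y‖ * ‖X‖ := re_inner_le_norm Y X
    _ = _ := by rw [hnorm, hnorm, Real.sqrt_mul' _ hY, mul_comm]

theorem IsHermitian.isSelfAdjoint_trace_mul {R : Type*} [CommRing R] [StarRing R]
    {X Y : Matrix n n R} (hX : X.IsHermitian) (hY : Y.IsHermitian) :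
    IsSelfAdjoint (X * Y).trace := by
  rw [IsSelfAdjoint, ← trace_conjTranspose, conjTranspose_mul, hX.eq, hY.eq, trace_mul_comm]

end Matrix

section Commutators

variable {d : Type*} [Fintype d]

theorem trace_mul_mComm_mul_self (H s V : Matrix d d ℂ) :
    (H * mComm (s * s) V).trace = (mComm H s * mAComm s V).trace := by
  simp only [mComm, mAComm, mul_sub, sub_mul, mul_add, trace_sub, trace_add, Matrix.mul_assoc]
  rw [trace_mul_comm s (H * (s * V)), trace_mul_comm s (H * (V * s))]
  simp only [Matrix.mul_assoc]
  ring

theorem isHermitian_mAComm {A B : Matrix d d ℂ} (hA : A.IsHermitian) (hB : B.IsHermitian) :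
    (mAComm A B).IsHermitian := by
  rw [IsHermitian, mAComm, conjTranspose_add, conjTranspose_mul, conjTranspose_mul, hA.eq, hB.eq,
    add_comm]

theorem isHermitian_I_smul_mComm {A B : Matrix d d ℂ} (hA : A.IsHermitian)
    (hB : B.IsHermitian) : (Complex.I • mComm A B).IsHermitian := by
  rw [IsHermitian, conjTranspose_smul, mComm, conjTranspose_sub, conjTranspose_mul,
    conjTranspose_mul, hA.eq, hB.eq, ← neg_sub, smul_neg, ← neg_smul]
  simp

theorem trace_I_smul_mul_I_smul (A : Matrix d d ℂ) :
    ((Complex.I • A) * (Complex.I • A)).trace = -(A * A).trace := by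
  simp [smul_smul]

end Commutators

theorem power_identity_and_cauchy_schwarz_bound_general
    {d : Type*} [Fintype d]
    (ρ : Matrix d d ℂ)
    (s : Matrix d d ℂ) (hs : s.PosSemidef) (hss : s * s = ρ)
    (H V : Matrix d d ℂ) (hH : H.IsHermitian) (hV : V.IsHermitian) :
    Matrix.trace (Complex.I • (H * mComm ρ V))
      = Matrix.trace (Complex.I • (mComm H s * mAComm s V)) ∧
    (Matrix.trace (Complex.I • (H * mComm ρ V))).im = 0 ∧
    (Matrix.trace (Complex.I • (H * mComm ρ V))).re
      ≤ Real.sqrt ((-(Matrix.trace (mComm H s * mComm H s))).re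
          * (Matrix.trace (mAComm s V * mAComm s V)).re) := by
  have identity : (Complex.I • (H * mComm ρ V)).trace
      = (Complex.I • (mComm H s * mAComm s V)).trace := by
    rw [← hss, trace_smul, trace_smul, trace_mul_mComm_mul_self]
  have hX := isHermitian_I_smul_mComm hH hs.isHermitian
  have hB := isHermitian_mAComm hs.isHermitian hV
  refine ⟨identity, ?_, ?_⟩ <;> rw [identity, ← smul_mul]
  · exact Complex.conj_eq_iff_im.mp (hX.isSelfAdjoint_trace_mul hB)
  · rw [← trace_I_smul_mul_I_smul]
    simpa only [hX.eq, hB.eq, RCLike.re_to_complex] using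
      re_trace_mul_conjTranspose_le (Complex.I • mComm H s) (mAComm s V)

/-- For every density matrix `ρ` (with positive-semidefinite square
root `s = √ρ`) and all Hermitian matrices `H` and `V`, the instantaneous charging
power `P = tr(iH[ρ,V])` is a real number which satisfies the identity
`tr(iH[ρ,V]) = tr(i[H,√ρ]{√ρ,V})` and the Cauchy–Schwarz-type bound
`tr(iH[ρ,V]) ≤ √((−tr([H,√ρ]²)) · tr({√ρ,V}²))`. -/
theorem power_identity_and_cauchy_schwarz_bound
    {d : Type*} [Fintype d] [DecidableEq d]
    (ρ : Matrix d d ℂ) (hρ : ρ.PosSemidef) (hτ : ρ.trace = 1)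
    (s : Matrix d d ℂ) (hs : s.PosSemidef) (hss : s * s = ρ)
    (H V : Matrix d d ℂ) (hH : H.IsHermitian) (hV : V.IsHermitian) :
    Matrix.trace (Complex.I • (H * mComm ρ V))
      = Matrix.trace (Complex.I • (mComm H s * mAComm s V)) ∧
    (Matrix.trace (Complex.I • (H * mComm ρ V))).im = 0 ∧
    (Matrix.trace (Complex.I • (H * mComm ρ V))).re
      ≤ Real.sqrt ((-(Matrix.trace (mComm H s * mComm H s))).re
          * (Matrix.trace (mAComm s V * mAComm s V)).re) :=
  power_identity_and_cauchy_schwarz_bound_general ρ s hs hss H V hH hV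
end
end

section
/- For every density matrix ρ and every Hermitian n×n matrix V one has the sandwich inequality (tr(ρV))² ≤ tr(√ρ V √ρ V) ≤ tr(ρ V²). -/
/-!
Both inequalities are positivity of Hilbert–Schmidt norms. The right one is
`‖[√ρ, V]‖₂² ≥ 0`, since `‖[√ρ, V]‖₂² = 2 tr(ρV²) - 2 tr(√ρ V √ρ V)`. The left one is
Cauchy–Schwarz for `√ρ` and `ρ^{1/4} V ρ^{1/4}`, whose inner product is `tr(ρV)`, with
`‖√ρ‖₂² = tr ρ = 1` and `‖ρ^{1/4} V ρ^{1/4}‖₂² = tr(√ρ V √ρ V)`. All three traces are real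
because the trace of a product of two Hermitian matrices is.
-/

open scoped ComplexOrder

namespace Matrix

variable {n : Type*} [Fintype n] {A B : Matrix n n ℂ}

lemma IsHermitian.mul_self (hA : A.IsHermitian) : (A * A).IsHermitian := by
  simpa only [hA.eq] using isHermitian_conjTranspose_mul_self A

lemma IsHermitian.mul_mul (hA : A.IsHermitian) (hB : B.IsHermitian) :
    (A * B * A).IsHermitian := by
  simpa only [hA.eq] using isHermitian_conjTranspose_mul_mul A hB

lemma IsHermitian.im_trace_mul_eq_zero (hA : A.IsHermitian) (hB : B.IsHermitian) :
    (A * B).trace.im = 0 :=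
  Complex.conj_eq_iff_im.mp <| by
    rw [← Complex.star_def, ← trace_conjTranspose, conjTranspose_mul, hA.eq, hB.eq, trace_mul_comm]

lemma IsHermitian.re_trace_mul_self_nonneg (hA : A.IsHermitian) : 0 ≤ (A * A).trace.re := by
  simpa only [hA.eq] using (Complex.nonneg_iff.mp (posSemidef_conjTranspose_mul_self A).trace_nonneg).1

lemma IsHermitian.sq_re_trace_mul_le (hA : A.IsHermitian) (hB : B.IsHermitian) :
    (A * B).trace.re ^ 2 ≤ (A * A).trace.re * (B * B).trace.re := by
  have hquad (x : ℝ) :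
      0 ≤ (A * A).trace.re * (x * x) + (-2 * (A * B).trace.re) * x + (B * B).trace.re := by
    have h := (hB.sub (hA.smul (IsSelfAdjoint.all x))).re_trace_mul_self_nonneg
    simp only [sub_mul, mul_sub, smul_mul_assoc, mul_smul_comm, trace_sub,
      trace_smul, Complex.sub_re, Complex.real_smul, Complex.re_ofReal_mul,
      trace_mul_comm B A] at h
    linarith
  have := discrim_le_zero hquad
  rw [discrim] at this
  nlinarith

lemma IsHermitian.re_trace_mul_mul_mul_le (hA : A.IsHermitian) (hB : B.IsHermitian) :
    (A * B * A * B).trace.re ≤ (A * A * B * B).trace.re := by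
  have h := (posSemidef_conjTranspose_mul_self (A * B - B * A)).trace_nonneg
  have hBAAB : (B * A * A * B).trace = (A * A * B * B).trace := by
    rw [trace_mul_comm (A * A * B)]; simp only [mul_assoc]
  have hABBA : (A * B * B * A).trace = (A * A * B * B).trace := by
    rw [trace_mul_comm (A * B * B)]; simp only [mul_assoc]
  have hBABA : (B * A * B * A).trace = (A * B * A * B).trace := by
    rw [trace_mul_comm (A * B * A)]; simp only [mul_assoc]
  simp only [conjTranspose_sub, conjTranspose_mul, hA.eq, hB.eq, sub_mul, mul_sub, trace_sub,
    ← mul_assoc, hBAAB, hABBA, hBABA] at h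
  have := (Complex.nonneg_iff.mp h).1
  simp only [Complex.sub_re] at this
  linarith

lemma PosSemidef.exists_mul_self_eq (hA : A.PosSemidef) :
    ∃ T : Matrix n n ℂ, T.IsHermitian ∧ T * T = A := by
  classical
  open scoped MatrixOrder in
  exact ⟨CFC.sqrt A, (nonneg_iff_posSemidef.mp (CFC.sqrt_nonneg A)).isHermitian,
    CFC.sqrt_mul_sqrt_self A (nonneg_iff_posSemidef.mpr hA)⟩

lemma PosSemidef.sq_re_trace_mul_self_mul_le (hA : A.PosSemidef) (hB : B.IsHermitian) :
    (A * A * B).trace.re ^ 2 ≤ (A * A).trace.re * (A * B * A * B).trace.re := by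
  obtain ⟨T, hT, rfl⟩ := hA.exists_mul_self_eq
  have hcross : (T * T * (T * B * T)).trace = (T * T * (T * T) * B).trace := by
    simp only [← mul_assoc]; rw [trace_mul_comm _ T]; simp only [← mul_assoc]
  have hsquare : (T * B * T * (T * B * T)).trace = (T * T * B * (T * T) * B).trace := by
    simp only [← mul_assoc]; rw [trace_mul_comm _ T]; simp only [← mul_assoc]
  simpa only [hcross, hsquare] using
    hT.mul_self.sq_re_trace_mul_le (hT.mul_mul hB)

end Matrix

theorem sandwich_inequality_general
    {d : Type*} [Fintype d]
    (ρ : Matrix d d ℂ) (hτ : ρ.trace = 1)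
    (s : Matrix d d ℂ) (hs : s.PosSemidef) (hss : s * s = ρ)
    (V : Matrix d d ℂ) (hV : V.IsHermitian) :
    (Matrix.trace (ρ * V)).im = 0 ∧
    (Matrix.trace (s * V * s * V)).im = 0 ∧
    (Matrix.trace (ρ * V * V)).im = 0 ∧
    (Matrix.trace (ρ * V)).re ^ 2 ≤ (Matrix.trace (s * V * s * V)).re ∧
    (Matrix.trace (s * V * s * V)).re ≤ (Matrix.trace (ρ * V * V)).re := by
  subst hss
  have hsH := hs.isHermitian
  refine ⟨hsH.mul_self.im_trace_mul_eq_zero hV,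
    (hsH.mul_mul hV).im_trace_mul_eq_zero hV, ?_, ?_,
    hsH.re_trace_mul_mul_mul_le hV⟩
  · rw [mul_assoc]
    exact hsH.mul_self.im_trace_mul_eq_zero hV.mul_self
  · simpa only [hτ, Complex.one_re, one_mul] using hs.sq_re_trace_mul_self_mul_le hV

/-- For every density matrix `ρ` (with positive-semidefinite square
root `s = √ρ`) and every Hermitian matrix `V`, one has the sandwich inequality
`(tr(ρV))² ≤ tr(√ρ V √ρ V) ≤ tr(ρ V²)` (all three quantities being real). -/
theorem sandwich_inequality
    {d : Type*} [Fintype d] [DecidableEq d]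
    (ρ : Matrix d d ℂ) (hρ : ρ.PosSemidef) (hτ : ρ.trace = 1)
    (s : Matrix d d ℂ) (hs : s.PosSemidef) (hss : s * s = ρ)
    (V : Matrix d d ℂ) (hV : V.IsHermitian) :
    (Matrix.trace (ρ * V)).im = 0 ∧
    (Matrix.trace (s * V * s * V)).im = 0 ∧
    (Matrix.trace (ρ * V * V)).im = 0 ∧
    (Matrix.trace (ρ * V)).re ^ 2 ≤ (Matrix.trace (s * V * s * V)).re ∧
    (Matrix.trace (s * V * s * V)).re ≤ (Matrix.trace (ρ * V * V)).re :=
  sandwich_inequality_general ρ hτ s hs hss V hV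
end

section
/- For every density matrix ρ and every Hermitian n×n matrix V, writing W = V − tr(ρV)·I, one has 2 Var_ρ(V) ≤ tr({√ρ, W}²) ≤ 4 Var_ρ(V); moreover, if ρ is pure (ρ = |ψ⟩⟨ψ| for a unit vector ψ), then tr({√ρ, W}²) = 2 Var_ρ(V). (This establishes that the coefficient κ := tr({√ρ,W}²)/(2 Var_ρ(V)) of Theorem 1 lies in the range 1 ≤ κ ≤ 2, with κ = 1 for pure states.) -/
/-! Expanding the square and cycling the trace gives
`tr({√ρ, W}²) = 2 tr(√ρ W √ρ W) + 2 tr(ρ W²)`, and `tr(ρ W²) = Var_ρ(V)` because `tr(ρ W) = 0`.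
The cross term `tr(√ρ W √ρ W)` is the trace of a product of the two positive semidefinite
matrices `√ρ` and `W √ρ W`, hence nonnegative, and by Cauchy–Schwarz for the Hilbert–Schmidt
inner product it is at most `tr(W √ρ √ρ W) = tr(ρ W²)`. For a pure state `ρ` is a projection,
so `√ρ = ρ` and `ρ W ρ = ⟨ψ, W ψ⟩ ρ`, which makes the cross term a multiple of `tr(ρ W) = 0`. -/

open Matrix BigOperators
open scoped ComplexOrder

noncomputable section

/-- Variance `Var_ρ(V) = tr(ρV²) − (tr(ρV))²` (a real number). -/
def varMat {d : Type*} [Fintype d] (ρ V : Matrix d d ℂ) : ℝ :=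
  (Matrix.trace (ρ * V * V)).re - (Matrix.trace (ρ * V)).re ^ 2

namespace Matrix

variable {n : Type*} [Fintype n]

open scoped MatrixOrder in
theorem PosSemidef.trace_mul_nonneg {𝕜 : Type*} [RCLike 𝕜] {A B : Matrix n n 𝕜}
    (hA : A.PosSemidef) (hB : B.PosSemidef) : 0 ≤ (A * B).trace := by
  classical
  set r := CFC.sqrt A
  have hr : rᴴ = r := (CFC.sqrt_nonneg A).posSemidef.isHermitian
  have hrr : r * r = A := CFC.sqrt_mul_sqrt_self A hA.nonneg
  calc (0 : 𝕜) ≤ (rᴴ * B * r).trace := (hB.conjTranspose_mul_mul_same r).trace_nonneg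
    _ = (A * B).trace := by rw [hr, trace_mul_cycle, ← hrr, Matrix.mul_assoc]

open scoped MatrixOrder in
theorem PosSemidef.eq_of_mul_self_eq_mul_self {𝕜 : Type*} [RCLike 𝕜]
    {A B : Matrix n n 𝕜} (hA : A.PosSemidef) (hB : B.PosSemidef) (h : A * A = B * B) :
    A = B := by
  classical
  exact (CFC.mul_self_eq_mul_self_iff A B hA.nonneg hB.nonneg).1 h

theorem re_trace_mul_self_le (A : Matrix n n ℂ) : (A * A).trace.re ≤ (Aᴴ * A).trace.re := by
  have h := (posSemidef_conjTranspose_mul_self (A - Aᴴ)).trace_nonneg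
  have hexp : (A - Aᴴ)ᴴ * (A - Aᴴ) = Aᴴ * A + A * Aᴴ - A * A - Aᴴ * Aᴴ := by
    simp only [conjTranspose_sub, conjTranspose_conjTranspose]
    noncomm_ring
  rw [hexp, trace_sub, trace_sub, trace_add, trace_mul_comm A Aᴴ, ← conjTranspose_mul,
    trace_conjTranspose] at h
  have := (Complex.nonneg_iff.1 h).1
  simp only [Complex.sub_re, Complex.add_re, Complex.star_def, Complex.conj_re] at this
  linarith

theorem vecMulVec_mul_mul_vecMulVec {α : Type*} [CommSemiring α] (u v w x : n → α)
    (M : Matrix n n α) :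
    vecMulVec u v * M * vecMulVec w x = (v ⬝ᵥ M *ᵥ w) • vecMulVec u x := by
  rw [vecMulVec_mul, vecMulVec_mul_vecMulVec, dotProduct_mulVec, vecMulVec_smul]

end Matrix

section Centering

variable {n : Type*} [Fintype n] {ρ V : Matrix n n ℂ}

theorem Matrix.IsHermitian.isSelfAdjoint_trace_mul_s5 (hρ : ρ.IsHermitian) (hV : V.IsHermitian) :
    IsSelfAdjoint (ρ * V).trace := by
  rw [IsSelfAdjoint, ← trace_conjTranspose, conjTranspose_mul, hV.eq, hρ.eq, trace_mul_comm]

variable [DecidableEq n]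

theorem Matrix.IsHermitian.sub_trace_mul_smul_one (hρ : ρ.IsHermitian) (hV : V.IsHermitian) :
    (V - (ρ * V).trace • (1 : Matrix n n ℂ)).IsHermitian :=
  hV.sub (isHermitian_one.smul (hρ.isSelfAdjoint_trace_mul_s5 hV))

theorem trace_mul_sub_trace_mul_smul_one (hτ : ρ.trace = 1) :
    (ρ * (V - (ρ * V).trace • (1 : Matrix n n ℂ))).trace = 0 := by
  rw [Matrix.mul_sub, Matrix.mul_smul, Matrix.mul_one, trace_sub, trace_smul, hτ, smul_eq_mul,
    mul_one, sub_self]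

theorem varMat_eq_re_trace_mul_sq (hρ : ρ.IsHermitian) (hτ : ρ.trace = 1) (hV : V.IsHermitian) :
    varMat ρ V = (ρ * (V - (ρ * V).trace • 1) * (V - (ρ * V).trace • 1)).trace.re := by
  have ht : (ρ * V).trace.im = 0 :=
    Complex.conj_eq_iff_im.1 (hρ.isSelfAdjoint_trace_mul_s5 hV)
  have h : ρ * (V - (ρ * V).trace • 1) * (V - (ρ * V).trace • 1) = ρ * V * V
      - (ρ * V).trace • (ρ * V) - (ρ * V).trace • (ρ * (V - (ρ * V).trace • 1)) := by
    simp only [Matrix.mul_sub, Matrix.sub_mul, Matrix.mul_smul, Matrix.smul_mul,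
      Matrix.mul_one, smul_sub]
  rw [varMat, h, trace_sub, trace_sub, trace_smul, trace_smul, trace_mul_sub_trace_mul_smul_one hτ]
  simp [sq, ht]

end Centering

section Anticommutator

variable {n : Type*} [Fintype n] {s W : Matrix n n ℂ}

theorem trace_mAComm_mul_self (s W : Matrix n n ℂ) :
    (mAComm s W * mAComm s W).trace = 2 * (s * W * (s * W)).trace + 2 * (s * s * W * W).trace := by
  have hexp : mAComm s W * mAComm s W
      = s * W * (s * W) + s * W * W * s + W * s * s * W + W * s * (W * s) := by
    rw [mAComm]
    noncomm_ring
  have h₁ : (s * W * W * s).trace = (s * s * W * W).trace := by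
    rw [trace_mul_comm]
    simp only [Matrix.mul_assoc]
  have h₂ : (W * s * s * W).trace = (s * s * W * W).trace := by
    simp only [Matrix.mul_assoc]
    rw [trace_mul_comm W]
    simp only [Matrix.mul_assoc]
  have h₃ : (W * s * (W * s)).trace = (s * W * (s * W)).trace := by
    simp only [Matrix.mul_assoc]
    rw [trace_mul_comm W]
    simp only [Matrix.mul_assoc]
  rw [hexp, trace_add, trace_add, trace_add, h₁, h₂, h₃]
  ring

theorem re_trace_mul_mul_self_nonneg (hs : s.PosSemidef) (hW : W.IsHermitian) :
    0 ≤ (s * W * (s * W)).trace.re := by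
  have h : s * W * (s * W) = s * (Wᴴ * s * W) := by rw [hW.eq]; noncomm_ring
  rw [h]
  exact (Complex.nonneg_iff.1 (hs.trace_mul_nonneg (hs.conjTranspose_mul_mul_same W))).1

theorem re_trace_mul_mul_self_le (hs : s.IsHermitian) (hW : W.IsHermitian) :
    (s * W * (s * W)).trace.re ≤ (s * s * W * W).trace.re := by
  have h := re_trace_mul_self_le (s * W)
  have hcycle : (W * s * (s * W)).trace = (s * s * W * W).trace := by
    simp only [Matrix.mul_assoc]
    rw [trace_mul_comm W]
    simp only [Matrix.mul_assoc]
  rwa [conjTranspose_mul, hs.eq, hW.eq, hcycle] at h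

end Anticommutator

/-- For every density matrix `ρ` (with positive-semidefinite square
root `s = √ρ`) and every Hermitian matrix `V`, writing `W = V − tr(ρV)·I`, one has
`2 Var_ρ(V) ≤ tr({√ρ, W}²) ≤ 4 Var_ρ(V)`; moreover, if `ρ` is pure
(`ρ = |ψ⟩⟨ψ|` for a unit vector `ψ`), then `tr({√ρ, W}²) = 2 Var_ρ(V)`.
(Hence the coefficient `κ := tr({√ρ,W}²)/(2 Var_ρ(V))` lies in the range
`1 ≤ κ ≤ 2`, with `κ = 1` for pure states.) -/
theorem kappa_bounds
    {d : Type*} [Fintype d] [DecidableEq d]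
    (ρ : Matrix d d ℂ) (hρ : ρ.PosSemidef) (hτ : ρ.trace = 1)
    (s : Matrix d d ℂ) (hs : s.PosSemidef) (hss : s * s = ρ)
    (V : Matrix d d ℂ) (hV : V.IsHermitian)
    (W : Matrix d d ℂ)
    (hW : W = V - Matrix.trace (ρ * V) • (1 : Matrix d d ℂ)) :
    2 * varMat ρ V ≤ (Matrix.trace (mAComm s W * mAComm s W)).re ∧
    (Matrix.trace (mAComm s W * mAComm s W)).re ≤ 4 * varMat ρ V ∧
    (∀ ψ : d → ℂ, star ψ ⬝ᵥ ψ = 1 → ρ = vecMulVec ψ (star ψ) →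
      (Matrix.trace (mAComm s W * mAComm s W)).re = 2 * varMat ρ V) := by
  have hWH : W.IsHermitian := hW ▸ hρ.isHermitian.sub_trace_mul_smul_one hV
  have hvar : varMat ρ V = (ρ * W * W).trace.re :=
    hW ▸ varMat_eq_re_trace_mul_sq hρ.isHermitian hτ hV
  have hsplit : (mAComm s W * mAComm s W).trace.re
      = 2 * (s * W * (s * W)).trace.re + 2 * varMat ρ V := by
    rw [trace_mAComm_mul_self, hss, hvar]
    simp
  have hcross_nonneg := re_trace_mul_mul_self_nonneg hs hWH
  have hcross_le := re_trace_mul_mul_self_le hs.isHermitian hWH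
  rw [hss, ← hvar] at hcross_le
  refine ⟨by linarith, by linarith, fun ψ hψ hρψ => ?_⟩
  have hidem : ρ * ρ = ρ := by rw [hρψ, vecMulVec_mul_vecMulVec, hψ, one_smul]
  have hsρ : s = ρ := hs.eq_of_mul_self_eq_mul_self hρ (hss.trans hidem.symm)
  have hproj : ρ * W * ρ = (star ψ ⬝ᵥ W *ᵥ ψ) • ρ := by
    rw [hρψ]
    exact vecMulVec_mul_mul_vecMulVec ψ (star ψ) ψ (star ψ) W
  have hmean : (ρ * W).trace = 0 := hW ▸ trace_mul_sub_trace_mul_smul_one hτ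
  rw [hsplit, hsρ, ← Matrix.mul_assoc, hproj, smul_mul, trace_smul, hmean, smul_zero]
  simp
end
end

section
/- (Proposition 2.) For every density matrix ρ on the N-cell tensor product space ⊗_{i=1}^N ℂ^{n_i}, the quantum state advantage is bounded by the number of cells: Γ_C(ρ) ≤ N. -/
open Matrix BigOperators
open scoped ComplexOrder

noncomputable section

/-- Commutation matrix `γ_C(ρ, M)` built from the square root `s = √ρ` of a density
matrix, with entries `γ_C(ρ,M)_{μν} = −tr([M_μ,√ρ][M_ν,√ρ])`. -/
def gammaC {d ι : Type*} [Fintype d] (s : Matrix d d ℂ) (M : ι → Matrix d d ℂ) :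
    Matrix ι ι ℝ :=
  fun μ ν => (-(Matrix.trace (mComm (M μ) s * mComm (M ν) s))).re

/-- Largest eigenvalue of a (finite, real symmetric) matrix. -/
def maxEig {ι : Type*} [Fintype ι] (G : Matrix ι ι ℝ) : ℝ :=
  sSup {c : ℝ | ∃ v : ι → ℝ, v ≠ 0 ∧ G.mulVec v = c • v}

/-- The operator on the `N`-cell space `⊗_j ℂ^{n_j}` acting as `A` on cell `i`
and as the identity on all other cells. -/
def localOp {N : ℕ} (n : Fin N → ℕ) (i : Fin N)
    (A : Matrix (Fin (n i)) (Fin (n i)) ℂ) :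
    Matrix ((j : Fin N) → Fin (n j)) ((j : Fin N) → Fin (n j)) ℂ :=
  fun x y => A (x i) (y i) * ∏ j ∈ Finset.univ.erase i, (if x j = y j then 1 else 0)

/-- The local observable set built from a choice `A i α` of Hermitian bases of the
individual cells: the observable `M_{(i,α)}` acts as `A i α` on cell `i` and as the
identity on all other cells. -/
def obsFamily {N : ℕ} (n : Fin N → ℕ)
    (A : ∀ i : Fin N, Fin (n i ^ 2) → Matrix (Fin (n i)) (Fin (n i)) ℂ) :
    ((i : Fin N) × Fin (n i ^ 2)) →
      Matrix ((j : Fin N) → Fin (n j)) ((j : Fin N) → Fin (n j)) ℂ :=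
  fun μ => localOp n μ.1 (A μ.1 μ.2)


/-! For a real vector `v` indexed by the observables, `vᵀ γ_C v = ‖[B, √ρ]‖²` (Frobenius norm)
with `B = ∑ v_μ M_μ = ∑ᵢ Cᵢ ⊗ 1`, where `Cᵢ = ∑_α v_{iα} A^i_α` acts on cell `i` alone. By the
triangle and Cauchy–Schwarz inequalities `‖[B, √ρ]‖² ≤ N ∑ᵢ ‖[Cᵢ ⊗ 1, √ρ]‖²`.
For Hermitian `X`, `‖[X, √ρ]‖² = 2 tr(X²ρ) - 2 tr(X√ρX√ρ) ≤ 2 tr(X²ρ)`. Taking `X = (Cᵢ - c) ⊗ 1`,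
which has the same commutator with `√ρ`, where `c` is the midpoint of the spectrum of `Cᵢ`, gives
`X² ≤ m = ((λ_max - λ_min)/2)²`, so `‖[Cᵢ ⊗ 1, √ρ]‖² ≤ 2m ≤ λ_max² + λ_min² ≤ tr(Cᵢ²)`, and
`tr(Cᵢ²) = ∑_α v_{iα}²` by trace orthonormality. Hence `vᵀ γ_C v ≤ N |v|²`. -/

attribute [local instance] Matrix.frobeniusNormedAddCommGroup

lemma Matrix.frobenius_norm_sq_eq_re_trace {m n : Type*} [Fintype m] [Fintype n]
    (X : Matrix m n ℂ) : ‖X‖ ^ 2 = (X * Xᴴ).trace.re := by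
  rw [frobenius_norm_def, ← Real.sqrt_eq_rpow, Real.sq_sqrt (by positivity)]
  simp only [trace, diag_apply, mul_apply, conjTranspose_apply, RCLike.star_def, Complex.mul_conj,
    Complex.re_sum, Complex.ofReal_re, Complex.normSq_eq_norm_sq, Real.rpow_two]

lemma norm_sum_sq_le_card_mul_sum_norm_sq {ι E : Type*} [Fintype ι] [SeminormedAddCommGroup E]
    (f : ι → E) : ‖∑ i, f i‖ ^ 2 ≤ Fintype.card ι * ∑ i, ‖f i‖ ^ 2 :=
  calc ‖∑ i, f i‖ ^ 2 ≤ (∑ i, ‖f i‖) ^ 2 := by gcongr; exact norm_sum_le _ _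
    _ ≤ _ := by simpa using sq_sum_le_card_mul_sum_sq (s := Finset.univ) (f := fun i => ‖f i‖)

lemma sq_sub_le_two_mul_sum_sq {ι : Type*} [Fintype ι] (f : ι → ℝ) (i j : ι) :
    (f i - f j) ^ 2 ≤ 2 * ∑ k, f k ^ 2 := by
  classical
  obtain rfl | hij := eq_or_ne i j
  · rw [sub_self, zero_pow two_ne_zero]
    positivity
  have hpair := Finset.sum_le_sum_of_subset_of_nonneg (Finset.subset_univ {i, j})
    (fun k _ _ => sq_nonneg (f k))
  rw [Finset.sum_pair hij] at hpair
  nlinarith [sq_nonneg (f i + f j)]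

lemma maxEig_le_of_forall_dotProduct_mulVec_le {ι : Type*} [Fintype ι] {G : Matrix ι ι ℝ}
    {c : ℝ} (hc : 0 ≤ c) (h : ∀ v, v ⬝ᵥ G *ᵥ v ≤ c * (v ⬝ᵥ v)) : maxEig G ≤ c := by
  refine Real.sSup_le ?_ hc
  rintro x ⟨v, hv, hGv⟩
  have hpos : 0 < v ⬝ᵥ v :=
    (dotProduct_self_star_nonneg v).lt_of_ne' (mt dotProduct_self_eq_zero.mp hv)
  have hv := h v
  rw [hGv, dotProduct_smul, smul_eq_mul] at hv
  exact le_of_mul_le_mul_right hv hpos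

lemma Matrix.isHermitian_sum_ofReal_smul {d ι : Type*} [Fintype ι] {M : ι → Matrix d d ℂ}
    (hM : ∀ μ, (M μ).IsHermitian) (v : ι → ℝ) : (∑ μ, (v μ : ℂ) • M μ).IsHermitian :=
  isSelfAdjoint_sum _ fun μ _ => (hM μ).smul (Complex.conj_ofReal (v μ))

lemma Matrix.PosSemidef.re_trace_mul_nonneg {d : Type*} [Fintype d] [DecidableEq d]
    {X Y : Matrix d d ℂ} (hX : X.PosSemidef) (hY : Y.PosSemidef) : 0 ≤ (X * Y).trace.re := by
  open scoped MatrixOrder in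
  obtain ⟨R, rfl⟩ := CStarAlgebra.nonneg_iff_eq_star_mul_self.mp hX.nonneg
  rw [star_eq_conjTranspose, Matrix.mul_assoc, trace_mul_comm]
  exact (RCLike.nonneg_iff.mp (hY.mul_mul_conjTranspose_same R).trace_nonneg).1

lemma Matrix.re_trace_sum_smul_mul_self {d κ : Type*} [Fintype d] [Fintype κ] [DecidableEq κ]
    {A : κ → Matrix d d ℂ} (hA : ∀ α β, (A α * A β).trace = if α = β then 1 else 0)
    (a : κ → ℝ) :
    ((∑ α, (a α : ℂ) • A α) * ∑ α, (a α : ℂ) • A α).trace.re = ∑ α, a α ^ 2 := by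
  simp [Finset.sum_mul, Finset.mul_sum, hA, sq]

section Spectral

variable {k : Type*} [Fintype k] [DecidableEq k] {C : Matrix k k ℂ}

lemma Matrix.IsHermitian.trace_cfc (hC : C.IsHermitian) (f : ℝ → ℝ) :
    (cfc f C).trace = ∑ j, (f (hC.eigenvalues j) : ℂ) := by
  rw [hC.cfc_eq, IsHermitian.cfc, Unitary.conjStarAlgAut_apply, trace_mul_cycle,
    Unitary.coe_star_mul_self, one_mul, trace_diagonal]
  rfl

lemma Matrix.IsHermitian.re_trace_mul_self (hC : C.IsHermitian) :
    (C * C).trace.re = ∑ j, hC.eigenvalues j ^ 2 := by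
  have hC' : IsSelfAdjoint C := hC
  have hsq : C * C = cfc (fun x : ℝ => x ^ 2) C := by
    rw [cfc_pow (fun x => x) 2 C, cfc_id' ℝ C, sq]
  rw [hsq, hC.trace_cfc, Complex.re_sum]
  simp only [Complex.ofReal_re]

lemma Matrix.IsHermitian.posSemidef_smul_one_sub_sq {c m : ℝ} (hC : C.IsHermitian)
    (h : ∀ j, (hC.eigenvalues j - c) ^ 2 ≤ m) :
    ((m : ℂ) • 1 - (C - (c : ℂ) • 1) * (C - (c : ℂ) • 1)).PosSemidef := by
  have hC' : IsSelfAdjoint C := hC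
  have hcfc : cfc (fun x : ℝ => m - (x - c) ^ 2) C =
      (m : ℂ) • 1 - (C - (c : ℂ) • 1) * (C - (c : ℂ) • 1) := by
    rw [cfc_sub (fun _ => m) (fun x => (x - c) ^ 2) C, cfc_const m C,
      cfc_pow (fun x => x - c) 2 C, cfc_sub (fun x => x) (fun _ => c) C, cfc_const c C,
      cfc_id' ℝ C, sq, Algebra.algebraMap_eq_smul_one, Algebra.algebraMap_eq_smul_one,
      ← Complex.coe_smul, ← Complex.coe_smul]
  open scoped MatrixOrder in
  rw [← hcfc, ← nonneg_iff_posSemidef]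
  refine cfc_nonneg fun x hx => ?_
  obtain ⟨j, rfl⟩ := hC.spectrum_real_eq_range_eigenvalues ▸ hx
  linarith [h j]

lemma Matrix.IsHermitian.exists_posSemidef_smul_one_sub_sq (hC : C.IsHermitian) :
    ∃ c m : ℝ, ((m : ℂ) • 1 - (C - (c : ℂ) • 1) * (C - (c : ℂ) • 1)).PosSemidef ∧
      2 * m ≤ (C * C).trace.re := by
  cases isEmpty_or_nonempty k
  · refine ⟨0, 0, ?_, by simp⟩
    convert PosSemidef.zero
    exact Subsingleton.elim _ _
  obtain ⟨i, hi⟩ := Finite.exists_max hC.eigenvalues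
  obtain ⟨j, hj⟩ := Finite.exists_min hC.eigenvalues
  refine ⟨(hC.eigenvalues i + hC.eigenvalues j) / 2,
    ((hC.eigenvalues i - hC.eigenvalues j) / 2) ^ 2,
    hC.posSemidef_smul_one_sub_sq fun l => ?_, ?_⟩
  · nlinarith [hi l, hj l]
  · rw [hC.re_trace_mul_self]
    nlinarith [sq_sub_le_two_mul_sum_sq hC.eigenvalues i j]

end Spectral

section Commutator

variable {d : Type*} [Fintype d]

lemma mComm_sum_left {ι : Type*} (t : Finset ι) (f : ι → Matrix d d ℂ) (s : Matrix d d ℂ) :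
    mComm (∑ i ∈ t, f i) s = ∑ i ∈ t, mComm (f i) s := by
  simp only [mComm, Finset.sum_mul, Finset.mul_sum, ← Finset.sum_sub_distrib]

lemma mComm_sub_left (X Y s : Matrix d d ℂ) : mComm (X - Y) s = mComm X s - mComm Y s := by
  simp only [mComm, sub_mul, mul_sub]; abel

lemma mComm_smul_left (c : ℂ) (X s : Matrix d d ℂ) : mComm (c • X) s = c • mComm X s := by
  simp only [mComm, smul_mul_assoc, mul_smul_comm, smul_sub]

lemma mComm_smul_one_left [DecidableEq d] (c : ℂ) (s : Matrix d d ℂ) :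
    mComm (c • (1 : Matrix d d ℂ)) s = 0 := by
  simp [mComm]

lemma Matrix.IsHermitian.conjTranspose_mComm {X s : Matrix d d ℂ} (hX : X.IsHermitian)
    (hs : s.IsHermitian) : (mComm X s)ᴴ = -mComm X s := by
  simp only [mComm, conjTranspose_sub, conjTranspose_mul, hX.eq, hs.eq, neg_sub]

lemma dotProduct_gammaC_mulVec {ι : Type*} [Fintype ι] {s : Matrix d d ℂ}
    {M : ι → Matrix d d ℂ} (hs : s.IsHermitian) (hM : ∀ μ, (M μ).IsHermitian) (v : ι → ℝ) :
    v ⬝ᵥ gammaC s M *ᵥ v = ‖mComm (∑ μ, (v μ : ℂ) • M μ) s‖ ^ 2 := by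
  rw [frobenius_norm_sq_eq_re_trace, (isHermitian_sum_ofReal_smul hM v).conjTranspose_mComm hs,
    mul_neg, trace_neg]
  simp only [mComm_sum_left, mComm_smul_left, Finset.sum_mul, Finset.mul_sum, smul_mul_assoc,
    mul_smul_comm, trace_sum, trace_smul, smul_eq_mul, ← Finset.sum_neg_distrib,
    Complex.re_sum, dotProduct, mulVec, gammaC]
  refine Finset.sum_congr rfl fun μ _ => Finset.sum_congr rfl fun ν _ => ?_
  rw [trace_mul_comm (mComm (M ν) s), ← mul_neg, ← mul_neg, Complex.re_ofReal_mul,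
    Complex.re_ofReal_mul]
  ring

lemma re_trace_mComm_mul_conjTranspose_le [DecidableEq d] {B s : Matrix d d ℂ} {m : ℝ}
    (hB : B.IsHermitian) (hs : s.PosSemidef) (hm : ((m : ℂ) • 1 - B * B).PosSemidef) :
    (mComm B s * (mComm B s)ᴴ).trace.re ≤ 2 * m * (s * s).trace.re := by
  have hss : (s * s).PosSemidef := by simpa [hs.1.eq] using posSemidef_conjTranspose_mul_self s
  have hBsB : (B * s * B).PosSemidef := by simpa [hB.eq] using hs.mul_mul_conjTranspose_same B
  have expand : (mComm B s * (mComm B s)ᴴ).trace =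
      2 * (B * B * s * s).trace - 2 * (B * s * B * s).trace := by
    have h₁ : (B * s * s * B).trace = (B * B * s * s).trace := by
      simpa only [Matrix.mul_assoc] using trace_mul_comm (B * s * s) B
    have h₂ : (s * B * B * s).trace = (B * B * s * s).trace := by
      simpa only [Matrix.mul_assoc] using trace_mul_comm s (B * B * s)
    have h₃ : (s * B * s * B).trace = (B * s * B * s).trace := by
      simpa only [Matrix.mul_assoc] using trace_mul_comm s (B * s * B)
    rw [hB.conjTranspose_mComm hs.1]
    simp only [mComm, mul_neg, trace_neg, sub_mul, mul_sub, trace_sub, ← Matrix.mul_assoc]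
    rw [h₁, h₂, h₃]
    ring
  have hm_trace : (((m : ℂ) • 1 - B * B) * (s * s)).trace =
      m * (s * s).trace - (B * B * s * s).trace := by
    rw [sub_mul, trace_sub, smul_mul_assoc, one_mul, trace_smul, smul_eq_mul, ← Matrix.mul_assoc]
  have h_gap := hm.re_trace_mul_nonneg hss
  have h_cross := hBsB.re_trace_mul_nonneg hs
  rw [hm_trace] at h_gap
  rw [expand]
  simp only [Complex.sub_re, Complex.mul_re, Complex.re_ofNat, Complex.im_ofNat,
    Complex.ofReal_re, Complex.ofReal_im, zero_mul, sub_zero] at h_gap ⊢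
  linarith

end Commutator

section LocalOp

variable {N : ℕ} {n : Fin N → ℕ} (i : Fin N)

open scoped Kronecker in
lemma localOp_eq_submatrix_kronecker (A : Matrix (Fin (n i)) (Fin (n i)) ℂ) :
    localOp n i A = (A ⊗ₖ (1 : Matrix ((j : {j // j ≠ i}) → Fin (n j)) _ ℂ)).submatrix
      (Equiv.piSplitAt i _) (Equiv.piSplitAt i _) := by
  ext x y
  simp [localOp, one_apply, Finset.prod_boole, funext_iff, Finset.mem_erase]

lemma localOp_one : localOp n i 1 = 1 := by
  rw [localOp_eq_submatrix_kronecker, one_kronecker_one, submatrix_one_equiv]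

lemma localOp_mul (A B : Matrix (Fin (n i)) (Fin (n i)) ℂ) :
    localOp n i A * localOp n i B = localOp n i (A * B) := by
  simp only [localOp_eq_submatrix_kronecker, submatrix_mul_equiv, ← mul_kronecker_mul, one_mul]

lemma localOp_sub (A B : Matrix (Fin (n i)) (Fin (n i)) ℂ) :
    localOp n i (A - B) = localOp n i A - localOp n i B := by
  ext x y
  simp [localOp, sub_mul]

lemma localOp_smul (c : ℂ) (A : Matrix (Fin (n i)) (Fin (n i)) ℂ) :
    localOp n i (c • A) = c • localOp n i A := by
  ext x y
  simp [localOp, mul_assoc]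

lemma localOp_sum {ι : Type*} (t : Finset ι) (f : ι → Matrix (Fin (n i)) (Fin (n i)) ℂ) :
    localOp n i (∑ α ∈ t, f α) = ∑ α ∈ t, localOp n i (f α) := by
  ext x y
  simp [localOp, Finset.sum_mul, Matrix.sum_apply]

lemma localOp_isHermitian {A : Matrix (Fin (n i)) (Fin (n i)) ℂ} (hA : A.IsHermitian) :
    (localOp n i A).IsHermitian := by
  rw [localOp_eq_submatrix_kronecker]
  refine IsHermitian.submatrix ?_ _
  rw [IsHermitian, conjTranspose_kronecker, hA.eq, conjTranspose_one]

lemma localOp_posSemidef {A : Matrix (Fin (n i)) (Fin (n i)) ℂ} (hA : A.PosSemidef) :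
    (localOp n i A).PosSemidef := by
  rw [localOp_eq_submatrix_kronecker]
  exact (hA.kronecker PosSemidef.one).submatrix _

lemma norm_mComm_localOp_sq_le {C : Matrix (Fin (n i)) (Fin (n i)) ℂ} (hC : C.IsHermitian)
    {s : Matrix ((j : Fin N) → Fin (n j)) ((j : Fin N) → Fin (n j)) ℂ} (hs : s.PosSemidef)
    (htr : (s * s).trace = 1) :
    ‖mComm (localOp n i C) s‖ ^ 2 ≤ (C * C).trace.re := by
  obtain ⟨c, m, hm, hmC⟩ := hC.exists_posSemidef_smul_one_sub_sq
  set C' := C - (c : ℂ) • 1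
  have hC' : C'.IsHermitian := hC.sub (isHermitian_one.smul (Complex.conj_ofReal c))
  have hshift : mComm (localOp n i C) s = mComm (localOp n i C') s := by
    rw [localOp_sub, localOp_smul, localOp_one, mComm_sub_left, mComm_smul_one_left, sub_zero]
  have hm' : ((m : ℂ) • 1 - localOp n i C' * localOp n i C').PosSemidef := by
    rw [localOp_mul, ← localOp_one i, ← localOp_smul, ← localOp_sub]
    exact localOp_posSemidef i hm
  calc ‖mComm (localOp n i C) s‖ ^ 2
      ≤ 2 * m * (s * s).trace.re := by
        rw [hshift, frobenius_norm_sq_eq_re_trace]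
        exact re_trace_mComm_mul_conjTranspose_le (localOp_isHermitian i hC') hs hm'
    _ ≤ (C * C).trace.re := by simpa [htr] using hmC

lemma sum_smul_obsFamily (A : ∀ i : Fin N, Fin (n i ^ 2) → Matrix (Fin (n i)) (Fin (n i)) ℂ)
    (v : ((i : Fin N) × Fin (n i ^ 2)) → ℝ) :
    ∑ μ, (v μ : ℂ) • obsFamily n A μ = ∑ i, localOp n i (∑ α, (v ⟨i, α⟩ : ℂ) • A i α) := by
  simp only [Fintype.sum_sigma, localOp_sum, localOp_smul, obsFamily]

end LocalOp

theorem quantum_state_advantage_le_cells_general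
    {N : ℕ} {n : Fin N → ℕ}
    (ρ : Matrix ((j : Fin N) → Fin (n j)) ((j : Fin N) → Fin (n j)) ℂ)
    (hτ : ρ.trace = 1)
    (s : Matrix ((j : Fin N) → Fin (n j)) ((j : Fin N) → Fin (n j)) ℂ)
    (hs : s.PosSemidef) (hss : s * s = ρ)
    (A : ∀ i : Fin N, Fin (n i ^ 2) → Matrix (Fin (n i)) (Fin (n i)) ℂ)
    (hAh : ∀ i α, (A i α).IsHermitian)
    (hAo : ∀ i α β, Matrix.trace (A i α * A i β) = if α = β then 1 else 0) :
    maxEig (gammaC s (obsFamily n A)) ≤ (N : ℝ) := by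
  refine maxEig_le_of_forall_dotProduct_mulVec_le N.cast_nonneg fun v => ?_
  set C := fun i => ∑ α, (v ⟨i, α⟩ : ℂ) • A i α
  calc v ⬝ᵥ gammaC s (obsFamily n A) *ᵥ v
      = ‖∑ i, mComm (localOp n i (C i)) s‖ ^ 2 := by
        rw [dotProduct_gammaC_mulVec (M := obsFamily n A) hs.1
            (fun μ => localOp_isHermitian μ.1 (hAh μ.1 μ.2)),
          sum_smul_obsFamily, mComm_sum_left]
    _ ≤ N * ∑ i, ‖mComm (localOp n i (C i)) s‖ ^ 2 := by
        simpa using norm_sum_sq_le_card_mul_sum_norm_sq fun i => mComm (localOp n i (C i)) s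
    _ ≤ N * ∑ i, (C i * C i).trace.re := by
        gcongr with i
        exact norm_mComm_localOp_sq_le i (isHermitian_sum_ofReal_smul (hAh i) _) hs (hss ▸ hτ)
    _ = N * (v ⬝ᵥ v) := by
        rw [dotProduct, Fintype.sum_sigma]
        congr 1
        refine Finset.sum_congr rfl fun i _ => ?_
        simp only [C, re_trace_sum_smul_mul_self (hAo i), sq]

/-- **Proposition 2.** For every density matrix `ρ` on the `N`-cell
space `⊗_{i=1}^N ℂ^{n_i}` (with positive-semidefinite square root `s = √ρ`) and
every trace-orthonormal Hermitian local observable set, the quantum state advantage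
`Γ_C(ρ)` — the largest eigenvalue of the commutation matrix — is bounded by the
number of cells: `Γ_C(ρ) ≤ N`. -/
theorem quantum_state_advantage_le_cells
    {N : ℕ} {n : Fin N → ℕ}
    (ρ : Matrix ((j : Fin N) → Fin (n j)) ((j : Fin N) → Fin (n j)) ℂ)
    (hρ : ρ.PosSemidef) (hτ : ρ.trace = 1)
    (s : Matrix ((j : Fin N) → Fin (n j)) ((j : Fin N) → Fin (n j)) ℂ)
    (hs : s.PosSemidef) (hss : s * s = ρ)
    (A : ∀ i : Fin N, Fin (n i ^ 2) → Matrix (Fin (n i)) (Fin (n i)) ℂ)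
    (hAh : ∀ i α, (A i α).IsHermitian)
    (hAo : ∀ i α β, Matrix.trace (A i α * A i β) = if α = β then 1 else 0) :
    maxEig (gammaC s (obsFamily n A)) ≤ (N : ℝ) :=
  quantum_state_advantage_le_cells_general ρ hτ s hs hss A hAh hAo
end
end

section
/- (Proposition 4.) Let ρ be a density matrix on the N-cell tensor product space and let U = U_1 ⊗ U_2 ⊗ ⋯ ⊗ U_N be a tensor product of unitary matrices U_i acting on the individual cells. Then there exists a real orthogonal matrix O such that γ_C(UρU†, M) = Oᵀ γ_C(ρ, M) O; in particular γ_C(UρU†, M) and γ_C(ρ, M) have the same eigenvalues, so the quantum state advantage is invariant under local unitary evolution: Γ_C(UρU†) = Γ_C(ρ). -/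
/-!
Write `V = U₁ ⊗ ⋯ ⊗ U_N`. Positive semidefinite square roots are unique, so `√(VρVᴴ) = V √ρ Vᴴ`,
and cyclicity of the trace gives `γ_C(VρVᴴ, M) = γ_C(ρ, VᴴMV)`. Conjugating a local observable
by `V` conjugates its single-cell factor by `Uᵢ`, and expanding `Uᵢᴴ A^i_α Uᵢ` in the
trace-orthonormal Hermitian basis `A^i` gives real coefficients forming an orthogonal matrix,
because conjugation preserves the trace inner product. Hence `Vᴴ M_μ V = ∑_ν O_νμ M_ν` for a
block-diagonal orthogonal `O`, and as `γ_C(ρ, ·)` is a real bilinear form,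
`γ_C(VρVᴴ, M) = Oᵀ γ_C(ρ, M) O`, an orthogonal similarity, which preserves eigenvalues.
-/

open Matrix BigOperators
open scoped ComplexOrder

noncomputable section

/-- The tensor product `U_1 ⊗ U_2 ⊗ ⋯ ⊗ U_N` of single-cell matrices. -/
def prodOp {N : ℕ} (n : Fin N → ℕ)
    (U : ∀ i : Fin N, Matrix (Fin (n i)) (Fin (n i)) ℂ) :
    Matrix ((j : Fin N) → Fin (n j)) ((j : Fin N) → Fin (n j)) ℂ :=
  fun x y => ∏ i, U i (x i) (y i)

section TraceOrthonormal

variable {m κ : Type*} [Fintype m] [Fintype κ] [DecidableEq κ] {B : κ → Matrix m m ℂ}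

theorem trace_mul_sum_smul_of_orthonormal
    (hB : ∀ α β, (B α * B β).trace = if α = β then 1 else 0) (g : κ → ℂ) (α : κ) :
    (B α * ∑ β, g β • B β).trace = g α := by
  simp [Matrix.mul_sum, hB]

theorem linearIndependent_of_trace_orthonormal
    (hB : ∀ α β, (B α * B β).trace = if α = β then 1 else 0) : LinearIndependent ℂ B := by
  refine Fintype.linearIndependent_iff.mpr fun g hg α => ?_
  rw [← trace_mul_sum_smul_of_orthonormal hB g α, hg, Matrix.mul_zero, Matrix.trace_zero]

theorem eq_sum_trace_mul_smul_of_orthonormal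
    (hB : ∀ α β, (B α * B β).trace = if α = β then 1 else 0)
    (hcard : Fintype.card κ = Fintype.card m ^ 2) (X : Matrix m m ℂ) :
    X = ∑ β, (B β * X).trace • B β := by
  have hspan := (linearIndependent_of_trace_orthonormal hB).span_eq_top_of_card_eq_finrank'
    (by rw [hcard, Module.finrank_matrix, Module.finrank_self, sq, mul_one])
  obtain ⟨c, rfl⟩ :=
    (Submodule.mem_span_range_iff_exists_fun ℂ).mp (hspan ▸ Submodule.mem_top (x := X))
  simp only [trace_mul_sum_smul_of_orthonormal hB]

theorem trace_mul_eq_sum_of_orthonormal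
    (hB : ∀ α β, (B α * B β).trace = if α = β then 1 else 0)
    (hcard : Fintype.card κ = Fintype.card m ^ 2) (X Y : Matrix m m ℂ) :
    (X * Y).trace = ∑ β, (B β * X).trace * (B β * Y).trace := by
  conv_lhs => rw [eq_sum_trace_mul_smul_of_orthonormal hB hcard X]
  simp [Finset.sum_mul, Matrix.trace_sum]

end TraceOrthonormal

theorem Matrix.IsHermitian.ofReal_re_trace_mul {m : Type*} [Fintype m] {X Y : Matrix m m ℂ}
    (hX : X.IsHermitian) (hY : Y.IsHermitian) : (((X * Y).trace.re : ℝ) : ℂ) = (X * Y).trace := by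
  rw [← Complex.conj_eq_iff_re, ← Complex.star_def, ← Matrix.trace_conjTranspose,
    conjTranspose_mul, hX.eq, hY.eq, Matrix.trace_mul_comm]

theorem trace_conj_mul_conj {m : Type*} [Fintype m] [DecidableEq m] {V : Matrix m m ℂ}
    (hV : Vᴴ * V = 1) (P Q : Matrix m m ℂ) :
    (V * P * Vᴴ * (V * Q * Vᴴ)).trace = (P * Q).trace := by
  rw [show V * P * Vᴴ * (V * Q * Vᴴ) = V * (P * (Vᴴ * V) * Q) * Vᴴ by
    simp only [Matrix.mul_assoc], hV, Matrix.mul_one, Matrix.trace_mul_cycle,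
    ← Matrix.mul_assoc, hV, Matrix.one_mul]

section ConjMatrix

variable {m κ : Type*} [Fintype m] {B : κ → Matrix m m ℂ}

/-- The matrix of `X ↦ Uᴴ * X * U` in a trace-orthonormal basis `B`; taking real parts loses
nothing when `B` is Hermitian (`ofReal_conjMatrix`). -/
def conjMatrix (B : κ → Matrix m m ℂ) (U : Matrix m m ℂ) : Matrix κ κ ℝ :=
  fun β α => (B β * (Uᴴ * B α * U)).trace.re

theorem ofReal_conjMatrix (hBh : ∀ α, (B α).IsHermitian) (U : Matrix m m ℂ) (β α : κ) :
    (conjMatrix B U β α : ℂ) = (B β * (Uᴴ * B α * U)).trace :=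
  (hBh β).ofReal_re_trace_mul (isHermitian_conjTranspose_mul_mul U (hBh α))

theorem conjTranspose_mul_mul_eq_sum_conjMatrix_smul [Fintype κ] [DecidableEq κ]
    (hBh : ∀ α, (B α).IsHermitian)
    (hB : ∀ α β, (B α * B β).trace = if α = β then 1 else 0)
    (hcard : Fintype.card κ = Fintype.card m ^ 2) (U : Matrix m m ℂ) (α : κ) :
    Uᴴ * B α * U = ∑ β, conjMatrix B U β α • B β := by
  conv_lhs => rw [eq_sum_trace_mul_smul_of_orthonormal hB hcard (Uᴴ * B α * U)]
  simp only [← ofReal_conjMatrix hBh, Complex.coe_smul]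

theorem conjMatrix_transpose_mul_self [Fintype κ] [DecidableEq κ] [DecidableEq m]
    (hBh : ∀ α, (B α).IsHermitian)
    (hB : ∀ α β, (B α * B β).trace = if α = β then 1 else 0)
    (hcard : Fintype.card κ = Fintype.card m ^ 2) {U : Matrix m m ℂ}
    (hU : U ∈ unitary (Matrix m m ℂ)) :
    (conjMatrix B U)ᵀ * conjMatrix B U = 1 := by
  ext α ν
  have hconj : (Uᴴ * B α * U * (Uᴴ * B ν * U)).trace = (B α * B ν).trace := by
    have hUU : U * Uᴴ = 1 := Unitary.mul_star_self_of_mem hU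
    simpa using trace_conj_mul_conj (V := Uᴴ) (by rwa [conjTranspose_conjTranspose]) (B α) (B ν)
  rw [Matrix.mul_apply, Matrix.one_apply]
  apply Complex.ofReal_injective
  push_cast [transpose_apply, ofReal_conjMatrix hBh]
  rw [← trace_mul_eq_sum_of_orthonormal hB hcard, hconj, hB]
  split_ifs <;> simp

end ConjMatrix

section CommutationMatrix

variable {d ι : Type*} [Fintype d]

theorem mComm_sum_smul [Fintype ι] (X : ι → Matrix d d ℂ) (c : ι → ℝ) (s : Matrix d d ℂ) :
    mComm (∑ ν, c ν • X ν) s = ∑ ν, c ν • mComm (X ν) s := by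
  simp [mComm, Finset.sum_mul, Finset.mul_sum, smul_sub, Finset.sum_sub_distrib]

theorem gammaC_sum_smul [Fintype ι] (s : Matrix d d ℂ) (M : ι → Matrix d d ℂ)
    (O : Matrix ι ι ℝ) :
    gammaC s (fun μ => ∑ ν, O ν μ • M ν) = Oᵀ * gammaC s M * O := by
  ext μ μ'
  simp only [gammaC, mComm_sum_smul, Finset.sum_mul, Finset.mul_sum, smul_mul_smul,
    Matrix.trace_sum, Matrix.trace_smul, Matrix.mul_apply, transpose_apply,
    ← Finset.sum_neg_distrib, Complex.re_sum, ← smul_neg, Complex.smul_re]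
  refine Finset.sum_congr rfl fun ν' _ => Finset.sum_congr rfl fun ν _ => ?_
  rw [smul_eq_mul]
  ring

theorem gammaC_unitary_conj [DecidableEq d] (s : Matrix d d ℂ) (M : ι → Matrix d d ℂ)
    {V : Matrix d d ℂ} (hV : V ∈ unitary (Matrix d d ℂ)) :
    gammaC (V * s * Vᴴ) M = gammaC s (fun μ => Vᴴ * M μ * V) := by
  have hVV : Vᴴ * V = 1 := Unitary.star_mul_self_of_mem hV
  have hVV' : V * Vᴴ = 1 := Unitary.mul_star_self_of_mem hV
  have hcomm : ∀ X, mComm X (V * s * Vᴴ) = V * mComm (Vᴴ * X * V) s * Vᴴ := by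
    intro X
    simp only [mComm, Matrix.mul_sub, Matrix.sub_mul, ← Matrix.mul_assoc, hVV', Matrix.one_mul]
    simp only [Matrix.mul_assoc, hVV', Matrix.mul_one]
  ext μ ν
  simp only [gammaC, hcomm, trace_conj_mul_conj hVV]

end CommutationMatrix

theorem maxEig_mul_mul_of_mul_eq_one {ι : Type*} [Fintype ι] [DecidableEq ι]
    {P Q : Matrix ι ι ℝ} (hPQ : P * Q = 1) (hQP : Q * P = 1) (G : Matrix ι ι ℝ) :
    maxEig (Q * G * P) = maxEig G := by
  have eigen_subset : ∀ {S T H : Matrix ι ι ℝ}, S * T = 1 →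
      {c : ℝ | ∃ v, v ≠ 0 ∧ H *ᵥ v = c • v} ⊆ {c : ℝ | ∃ v, v ≠ 0 ∧ (T * H * S) *ᵥ v = c • v} := by
    rintro S T H hST c ⟨v, hv0, hv⟩
    refine ⟨T *ᵥ v, fun hTv => hv0 ?_, ?_⟩
    · rw [← one_mulVec v, ← hST, ← mulVec_mulVec, hTv, mulVec_zero]
    · rw [mulVec_mulVec, Matrix.mul_assoc, Matrix.mul_assoc, hST, Matrix.mul_one,
        ← mulVec_mulVec, hv, mulVec_smul]
  refine congrArg sSup (subset_antisymm ?_ (eigen_subset hPQ))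
  have hG : P * (Q * G * P) * Q = G := by
    simp only [← Matrix.mul_assoc, hPQ, Matrix.one_mul]
    rw [Matrix.mul_assoc, hPQ, Matrix.mul_one]
  simpa only [hG] using eigen_subset (H := Q * G * P) hQP

section BlockDiagonal

variable {o R : Type*} [Fintype o] [DecidableEq o] {m' : o → Type*} [∀ i, Fintype (m' i)]

theorem sum_blockDiagonal'_apply_smul [Semiring R] {M : Type*} [AddCommMonoid M] [Module R M]
    (W : ∀ i, Matrix (m' i) (m' i) R) (f : (Σ i, m' i) → M) (i : o) (α : m' i) :
    ∑ p, blockDiagonal' W p ⟨i, α⟩ • f p = ∑ β, W i β α • f ⟨i, β⟩ := by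
  rw [Fintype.sum_sigma, Finset.sum_eq_single i]
  · simp only [blockDiagonal'_apply_eq]
  · intro k _ hk
    simp [blockDiagonal'_apply_ne _ _ _ hk]
  · simp

theorem blockDiagonal'_transpose_mul_self [CommSemiring R] [∀ i, DecidableEq (m' i)]
    {W : ∀ i, Matrix (m' i) (m' i) R} (hW : ∀ i, (W i)ᵀ * W i = 1) :
    (blockDiagonal' W)ᵀ * blockDiagonal' W = 1 := by
  rw [blockDiagonal'_transpose, ← blockDiagonal'_mul, funext hW]
  exact blockDiagonal'_one

end BlockDiagonal

open scoped MatrixOrder in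
theorem Matrix.PosSemidef.eq_mul_mul_conjTranspose_of_mul_self_eq {d : Type*} [Fintype d]
    [DecidableEq d] {s t V : Matrix d d ℂ} (ht : t.PosSemidef) (hs : s.PosSemidef)
    (hV : V ∈ unitary (Matrix d d ℂ)) (h : t * t = V * (s * s) * Vᴴ) : t = V * s * Vᴴ := by
  refine (CFC.mul_self_eq_mul_self_iff t _ ht.nonneg
    (hs.mul_mul_conjTranspose_same V).nonneg).mp ?_
  rw [h, show V * s * Vᴴ * (V * s * Vᴴ) = V * s * (Vᴴ * V) * s * Vᴴ by
    simp only [Matrix.mul_assoc], ← star_eq_conjTranspose, Unitary.star_mul_self_of_mem hV,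
    Matrix.mul_one]
  simp only [Matrix.mul_assoc]

section Cells

variable {N : ℕ} {n : Fin N → ℕ}

theorem prodOp_mul (B C : ∀ i, Matrix (Fin (n i)) (Fin (n i)) ℂ) :
    prodOp n B * prodOp n C = prodOp n (fun i => B i * C i) := by
  ext x y
  simp only [Matrix.mul_apply, prodOp]
  rw [Finset.prod_univ_sum, Fintype.piFinset_univ]
  exact Finset.sum_congr rfl fun z _ => Finset.prod_mul_distrib.symm

theorem prodOp_conjTranspose (B : ∀ i, Matrix (Fin (n i)) (Fin (n i)) ℂ) :
    (prodOp n B)ᴴ = prodOp n (fun i => (B i)ᴴ) := by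
  ext x y
  simp [prodOp, star_prod]

theorem prodOp_one : prodOp n (fun i => (1 : Matrix (Fin (n i)) (Fin (n i)) ℂ)) = 1 := by
  ext x y
  simp only [prodOp, Matrix.one_apply, Finset.prod_boole]
  simp [funext_iff]

theorem prodOp_mem_unitary {U : ∀ i, Matrix (Fin (n i)) (Fin (n i)) ℂ}
    (hU : ∀ i, U i ∈ unitary (Matrix (Fin (n i)) (Fin (n i)) ℂ)) :
    prodOp n U ∈ unitary _ := by
  rw [← unitaryGroup, mem_unitaryGroup_iff', star_eq_conjTranspose, prodOp_conjTranspose,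
    prodOp_mul]
  simp only [← star_eq_conjTranspose, Unitary.star_mul_self_of_mem (hU _)]
  exact prodOp_one

theorem localOp_eq_prodOp_update (i : Fin N) (A : Matrix (Fin (n i)) (Fin (n i)) ℂ) :
    localOp n i A = prodOp n (Function.update (fun _ => 1) i A) := by
  ext x y
  simp only [localOp, prodOp]
  rw [← Finset.mul_prod_erase Finset.univ _ (Finset.mem_univ i), Function.update_self]
  congr 1
  refine Finset.prod_congr rfl fun j hj => ?_
  rw [Function.update_of_ne (Finset.ne_of_mem_erase hj), Matrix.one_apply]

theorem conjTranspose_prodOp_mul_localOp_mul_prodOp {U : ∀ i, Matrix (Fin (n i)) (Fin (n i)) ℂ}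
    (hU : ∀ i, U i ∈ unitary (Matrix (Fin (n i)) (Fin (n i)) ℂ))
    (i : Fin N) (A : Matrix (Fin (n i)) (Fin (n i)) ℂ) :
    (prodOp n U)ᴴ * localOp n i A * prodOp n U = localOp n i ((U i)ᴴ * A * U i) := by
  rw [localOp_eq_prodOp_update, localOp_eq_prodOp_update, prodOp_conjTranspose, prodOp_mul,
    prodOp_mul]
  congr 1
  funext j
  rcases eq_or_ne j i with rfl | hji
  · simp
  · simp only [Function.update_of_ne hji, Matrix.mul_one, ← star_eq_conjTranspose,
      Unitary.star_mul_self_of_mem (hU j)]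

theorem localOp_sum_smul {ι : Type*} [Fintype ι] (i : Fin N) (c : ι → ℝ)
    (X : ι → Matrix (Fin (n i)) (Fin (n i)) ℂ) :
    localOp n i (∑ β, c β • X β) = ∑ β, c β • localOp n i (X β) := by
  ext x y
  simp [localOp, Matrix.sum_apply, Finset.sum_mul, mul_assoc]

theorem conjTranspose_prodOp_mul_obsFamily_mul_prodOp
    {A : ∀ i : Fin N, Fin (n i ^ 2) → Matrix (Fin (n i)) (Fin (n i)) ℂ}
    (hAh : ∀ i α, (A i α).IsHermitian)
    (hAo : ∀ i α β, (A i α * A i β).trace = if α = β then 1 else 0)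
    {U : ∀ i, Matrix (Fin (n i)) (Fin (n i)) ℂ}
    (hU : ∀ i, U i ∈ unitary (Matrix (Fin (n i)) (Fin (n i)) ℂ)) (μ : (i : Fin N) × Fin (n i ^ 2)) :
    (prodOp n U)ᴴ * obsFamily n A μ * prodOp n U
      = ∑ ν, blockDiagonal' (fun i => conjMatrix (A i) (U i)) ν μ • obsFamily n A ν := by
  obtain ⟨i, α⟩ := μ
  rw [sum_blockDiagonal'_apply_smul]
  simp only [obsFamily]
  rw [conjTranspose_prodOp_mul_localOp_mul_prodOp hU, conjTranspose_mul_mul_eq_sum_conjMatrix_smul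
    (hAh i) (hAo i) (by simp) (U i) α, localOp_sum_smul]

end Cells

theorem local_unitary_invariance_general
    {N : ℕ} {n : Fin N → ℕ}
    (ρ : Matrix ((j : Fin N) → Fin (n j)) ((j : Fin N) → Fin (n j)) ℂ)
    (s : Matrix ((j : Fin N) → Fin (n j)) ((j : Fin N) → Fin (n j)) ℂ)
    (hs : s.PosSemidef) (hss : s * s = ρ)
    (A : ∀ i : Fin N, Fin (n i ^ 2) → Matrix (Fin (n i)) (Fin (n i)) ℂ)
    (hAh : ∀ i α, (A i α).IsHermitian)
    (hAo : ∀ i α β, Matrix.trace (A i α * A i β) = if α = β then 1 else 0)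
    (U : ∀ i : Fin N, Matrix (Fin (n i)) (Fin (n i)) ℂ)
    (hU : ∀ i, (U i)ᴴ * U i = 1 ∧ U i * (U i)ᴴ = 1)
    (s' : Matrix ((j : Fin N) → Fin (n j)) ((j : Fin N) → Fin (n j)) ℂ)
    (hs' : s'.PosSemidef)
    (hss' : s' * s' = prodOp n U * ρ * (prodOp n U)ᴴ) :
    (∃ O : Matrix ((i : Fin N) × Fin (n i ^ 2)) ((i : Fin N) × Fin (n i ^ 2)) ℝ,
      Oᵀ * O = 1 ∧ O * Oᵀ = 1 ∧
      gammaC s' (obsFamily n A) = Oᵀ * gammaC s (obsFamily n A) * O) ∧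
    maxEig (gammaC s' (obsFamily n A)) = maxEig (gammaC s (obsFamily n A)) := by
  have hUi : ∀ i, U i ∈ unitary (Matrix (Fin (n i)) (Fin (n i)) ℂ) :=
    fun i => Unitary.mem_iff.mpr (hU i)
  have hV := prodOp_mem_unitary hUi
  have hs'_eq : s' = prodOp n U * s * (prodOp n U)ᴴ :=
    hs'.eq_mul_mul_conjTranspose_of_mul_self_eq hs hV (by rw [hss', hss])
  set O := blockDiagonal' fun i => conjMatrix (A i) (U i)
  have hOO : Oᵀ * O = 1 := blockDiagonal'_transpose_mul_self fun i =>
    conjMatrix_transpose_mul_self (hAh i) (hAo i) (by simp) (hUi i)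
  have hOO' : O * Oᵀ = 1 := mul_eq_one_comm.mp hOO
  have hγ : gammaC s' (obsFamily n A) = Oᵀ * gammaC s (obsFamily n A) * O := by
    rw [hs'_eq, gammaC_unitary_conj _ _ hV,
      funext (conjTranspose_prodOp_mul_obsFamily_mul_prodOp hAh hAo hUi), gammaC_sum_smul]
  refine ⟨⟨O, hOO, hOO', hγ⟩, ?_⟩
  rw [hγ, maxEig_mul_mul_of_mul_eq_one hOO' hOO]

/-- **Proposition 4.** For a density matrix `ρ` on the `N`-cell space
and a tensor product `U = U_1 ⊗ ⋯ ⊗ U_N` of local unitaries, there exists a real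
orthogonal matrix `O` with `γ_C(UρU†, M) = Oᵀ γ_C(ρ, M) O`; in particular the two
commutation matrices have the same eigenvalues, so the quantum state advantage is
invariant under local unitary evolution: `Γ_C(UρU†) = Γ_C(ρ)`. -/
theorem local_unitary_invariance
    {N : ℕ} {n : Fin N → ℕ}
    (ρ : Matrix ((j : Fin N) → Fin (n j)) ((j : Fin N) → Fin (n j)) ℂ)
    (hρ : ρ.PosSemidef) (hτ : ρ.trace = 1)
    (s : Matrix ((j : Fin N) → Fin (n j)) ((j : Fin N) → Fin (n j)) ℂ)
    (hs : s.PosSemidef) (hss : s * s = ρ)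
    (A : ∀ i : Fin N, Fin (n i ^ 2) → Matrix (Fin (n i)) (Fin (n i)) ℂ)
    (hAh : ∀ i α, (A i α).IsHermitian)
    (hAo : ∀ i α β, Matrix.trace (A i α * A i β) = if α = β then 1 else 0)
    (U : ∀ i : Fin N, Matrix (Fin (n i)) (Fin (n i)) ℂ)
    (hU : ∀ i, (U i)ᴴ * U i = 1 ∧ U i * (U i)ᴴ = 1)
    (s' : Matrix ((j : Fin N) → Fin (n j)) ((j : Fin N) → Fin (n j)) ℂ)
    (hs' : s'.PosSemidef)
    (hss' : s' * s' = prodOp n U * ρ * (prodOp n U)ᴴ) :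
    (∃ O : Matrix ((i : Fin N) × Fin (n i ^ 2)) ((i : Fin N) × Fin (n i ^ 2)) ℝ,
      Oᵀ * O = 1 ∧ O * Oᵀ = 1 ∧
      gammaC s' (obsFamily n A) = Oᵀ * gammaC s (obsFamily n A) * O) ∧
    maxEig (gammaC s' (obsFamily n A)) = maxEig (gammaC s (obsFamily n A)) :=
  local_unitary_invariance_general ρ s hs hss A hAh hAo U hU s' hs' hss'
end
end

section
/- (Existence of an optimal driving Hamiltonian saturating the Cauchy–Schwarz step.) Let ρ = diag(ρ_1, …, ρ_n) be a diagonal density matrix (ρ_α ≥ 0, Σ_α ρ_α = 1) and let H be any Hermitian n×n matrix. Define the matrix V by V_{αβ} = i · (√ρ_β − √ρ_α)/(√ρ_α + √ρ_β) · H_{αβ} whenever √ρ_α + √ρ_β > 0, and V_{αβ} = 0 otherwise. Then V is Hermitian and satisfies the equality condition {√ρ, V} = i [H, √ρ]. -/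
/-!
For a diagonal `D = diag(a)`, `(D V + V D)_{αβ} = (a_α + a_β) V_{αβ}` and
`(H D - D H)_{αβ} = (a_β - a_α) H_{αβ}`, so `{D, V} = i [H, D]` decouples into one scalar
equation per entry; `V` is its solution, with `V_{αβ} = 0` forced where `a_α = a_β = 0`.
`V` is Hermitian because its coefficient `i (a_β - a_α) / (a_α + a_β)` is conjugate-symmetric.
-/

open Matrix

noncomputable section

section OptimalDriving

variable {d : Type*}

theorem mAComm_diagonal_apply [Fintype d] [DecidableEq d] (a : d → ℂ) (V : Matrix d d ℂ)
    (α β : d) :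
    mAComm (diagonal a) V α β = (a α + a β) * V α β := by
  simp only [mAComm, Matrix.add_apply, diagonal_mul, mul_diagonal]
  ring

theorem mComm_diagonal_apply [Fintype d] [DecidableEq d] (H : Matrix d d ℂ) (a : d → ℂ)
    (α β : d) :
    mComm H (diagonal a) α β = (a β - a α) * H α β := by
  simp only [mComm, Matrix.sub_apply, diagonal_mul, mul_diagonal]
  ring

/-- `a` stands for the diagonal of `√ρ`. -/
def optimalDriving (a : d → ℝ) (H : Matrix d d ℂ) : Matrix d d ℂ :=
  of fun α β =>
    if 0 < a α + a β then
      Complex.I * (((a β : ℂ) - (a α : ℂ)) / ((a α : ℂ) + (a β : ℂ))) * H α β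
    else 0

theorem optimalDriving_isHermitian (a : d → ℝ) {H : Matrix d d ℂ} (hH : H.IsHermitian) :
    (optimalDriving a H).IsHermitian := by
  ext α β
  simp only [conjTranspose_apply, optimalDriving, of_apply, add_comm (a β)]
  split_ifs
  · simp only [star_mul', star_div₀, star_sub, star_add, Complex.star_def, Complex.conj_I,
      Complex.conj_ofReal, hH.apply]
    ring
  · exact star_zero ℂ

theorem add_mul_optimalDriving_apply {a : d → ℝ} (ha : ∀ α, 0 ≤ a α) (H : Matrix d d ℂ)
    (α β : d) :
    ((a α : ℂ) + a β) * optimalDriving a H α β = Complex.I * ((a β - a α) * H α β) := by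
  rw [optimalDriving, of_apply]
  split_ifs with hpos
  · have hne : (a α : ℂ) + a β ≠ 0 := by exact_mod_cast hpos.ne'
    field_simp
  · have hα : a α = 0 := by linarith [ha α, ha β]
    have hβ : a β = 0 := by linarith [ha α, ha β]
    simp [hα, hβ]

theorem mAComm_diagonal_optimalDriving [Fintype d] [DecidableEq d] {a : d → ℝ}
    (ha : ∀ α, 0 ≤ a α) (H : Matrix d d ℂ) :
    mAComm (diagonal fun α => (a α : ℂ)) (optimalDriving a H) =
      Complex.I • mComm H (diagonal fun α => (a α : ℂ)) := by
  ext α β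
  rw [mAComm_diagonal_apply, Matrix.smul_apply, mComm_diagonal_apply, smul_eq_mul,
    add_mul_optimalDriving_apply ha]

end OptimalDriving

theorem optimal_driving_exists_general
    {d : Type*} [Fintype d] [DecidableEq d]
    (r : d → ℝ)
    (s : Matrix d d ℂ) (hs : s = Matrix.diagonal fun α => (Real.sqrt (r α) : ℂ))
    (H : Matrix d d ℂ) (hH : H.IsHermitian)
    (V : Matrix d d ℂ)
    (hV : ∀ α β, V α β =
      if 0 < Real.sqrt (r α) + Real.sqrt (r β) then
        Complex.I * (((Real.sqrt (r β) : ℂ) - (Real.sqrt (r α) : ℂ))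
          / ((Real.sqrt (r α) : ℂ) + (Real.sqrt (r β) : ℂ))) * H α β
      else 0) :
    V.IsHermitian ∧ mAComm s V = Complex.I • mComm H s := by
  have hVdef : V = optimalDriving (fun α => Real.sqrt (r α)) H := ext hV
  subst hs hVdef
  exact ⟨optimalDriving_isHermitian _ hH,
    mAComm_diagonal_optimalDriving (fun α => Real.sqrt_nonneg (r α)) H⟩

/-- **existence of an optimal driving Hamiltonian saturating the
Cauchy–Schwarz step.** Let `ρ = diag(ρ_1, …, ρ_n)` be a diagonal density matrix
(`ρ_α ≥ 0`, `Σ_α ρ_α = 1`), so that `√ρ = diag(√ρ_1, …, √ρ_n)`, and let `H` be any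
Hermitian matrix. Define `V` by
`V_{αβ} = i (√ρ_β − √ρ_α)/(√ρ_α + √ρ_β) H_{αβ}` whenever `√ρ_α + √ρ_β > 0`, and
`V_{αβ} = 0` otherwise. Then `V` is Hermitian and satisfies the equality condition
`{√ρ, V} = i [H, √ρ]`. -/
theorem optimal_driving_exists
    {d : Type*} [Fintype d] [DecidableEq d]
    (r : d → ℝ) (hr : ∀ α, 0 ≤ r α) (hrsum : ∑ α, r α = 1)
    (ρ : Matrix d d ℂ) (hρ : ρ = Matrix.diagonal fun α => (r α : ℂ))
    (s : Matrix d d ℂ) (hs : s = Matrix.diagonal fun α => (Real.sqrt (r α) : ℂ))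
    (H : Matrix d d ℂ) (hH : H.IsHermitian)
    (V : Matrix d d ℂ)
    (hV : ∀ α β, V α β =
      if 0 < Real.sqrt (r α) + Real.sqrt (r β) then
        Complex.I * (((Real.sqrt (r β) : ℂ) - (Real.sqrt (r α) : ℂ))
          / ((Real.sqrt (r α) : ℂ) + (Real.sqrt (r β) : ℂ))) * H α β
      else 0) :
    V.IsHermitian ∧ mAComm s V = Complex.I • mComm H s :=
  optimal_driving_exists_general r s hs H hH V hV
end
end
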